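/- Every point of X other than ⟨0,1,0⟩ has a unique representative of the form (x, y, 1) with x^{q+1} = y + y^q; in particular the number of pairs (x,y) ∈ F_{q^2}² with x^{q+1} = y + y^q is exactly q³. -/

import Mathlib

/-- The Hermitian form `β(u,v) = -x₁x₂^q + y₁z₂^q + z₁y₂^q` on `F_{q²}³`. -/
def herm {K : Type*} [Field K] (q : ℕ) (u v : Fin 3 → K) : K :=
  -(u 0 * v 0 ^ q) + u 1 * v 2 ^ q + u 2 * v 1 ^ q

/-!
A point with vanishing last coordinate is isotropic only if its first coordinate vanishes too,
i.e. it is `⟨0,1,0⟩`; any other point is normalized by dividing by its last coordinate, and two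
vectors with last coordinate `1` spanning the same line are equal.

For the count, `T y = y + y^q` is additive (the trace onto `F_q`). Its kernel and its image, which
lies in `{c | c^q = c}`, are root sets of polynomials of degree `q`, so both have at most `q`
elements; as `|ker T| · |im T| = q²`, both have exactly `q`, and `im T = {c | c^q = c}`. The norm
`x^(q+1)` lies in this set, so every `x` has exactly `q` partners `y`.
-/

open Finset Polynomial

section Representatives

variable {K : Type*} [Field K]

lemma herm_smul_smul (q : ℕ) (a b : K) (u v : Fin 3 → K) :
    herm q (a • u) (b • v) = a * b ^ q * herm q u v := by
  simp only [herm, Pi.smul_apply, smul_eq_mul, mul_pow]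
  ring

lemma herm_affine_self_eq_zero_iff (q : ℕ) (x y : K) :
    herm q ![x, y, 1] ![x, y, 1] = 0 ↔ x ^ (q + 1) = y + y ^ q := by
  simp only [herm, Matrix.cons_val_zero, Matrix.cons_val_one, Matrix.cons_val_two,
    Matrix.head_cons, Matrix.tail_cons, one_pow, mul_one, one_mul, pow_succ']
  constructor <;> intro h <;> linear_combination -h

lemma eq_smul_affine_of_apply_two_ne_zero {u : Fin 3 → K} (h2 : u 2 ≠ 0) :
    u = u 2 • ![u 0 / u 2, u 1 / u 2, 1] := by
  ext i
  fin_cases i <;> simp [mul_div_cancel₀ _ h2]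

lemma apply_two_ne_zero_of_herm_self_eq_zero {q : ℕ} (hq : q ≠ 0) {u : Fin 3 → K}
    (hu : u ≠ 0) (hiso : herm q u u = 0)
    (hne : Submodule.span K {u} ≠ Submodule.span K {(![0, 1, 0] : Fin 3 → K)}) :
    u 2 ≠ 0 := by
  intro h2
  have h0 : u 0 = 0 := by
    simpa [herm, h2, zero_pow hq, hq] using hiso
  have h1 : u 1 ≠ 0 := fun h1 ↦ hu <| by ext i; fin_cases i <;> simp [h0, h1, h2]
  have hu' : u = u 1 • ![0, 1, 0] := by ext i; fin_cases i <;> simp [h0, h2]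
  exact hne (hu' ▸ Submodule.span_singleton_smul_eq (isUnit_iff_ne_zero.2 h1) _)

lemma affine_eq_of_span_eq {x y x' y' : K}
    (h : Submodule.span K {(![x, y, 1] : Fin 3 → K)} = Submodule.span K {![x', y', 1]}) :
    (x, y) = (x', y') := by
  obtain ⟨z, hz⟩ := Submodule.span_singleton_eq_span_singleton.1 h
  have hz1 : (z : K) = 1 := by simpa [Units.smul_def] using congrFun hz 2
  simp only [Units.smul_def, hz1, one_smul] at hz
  simpa using hz

lemma existsUnique_affine_representative {q : ℕ} (hq : q ≠ 0) {u : Fin 3 → K}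
    (hu : u ≠ 0) (hiso : herm q u u = 0)
    (hne : Submodule.span K {u} ≠ Submodule.span K {(![0, 1, 0] : Fin 3 → K)}) :
    ∃! xy : K × K,
      Submodule.span K {u} = Submodule.span K {(![xy.1, xy.2, 1] : Fin 3 → K)}
      ∧ xy.1 ^ (q + 1) = xy.2 + xy.2 ^ q := by
  have h2 := apply_two_ne_zero_of_herm_self_eq_zero hq hu hiso hne
  have hu' := eq_smul_affine_of_apply_two_ne_zero h2
  have hspan : Submodule.span K {u} = Submodule.span K {![u 0 / u 2, u 1 / u 2, 1]} := by
    conv_lhs => rw [hu']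
    exact Submodule.span_singleton_smul_eq (isUnit_iff_ne_zero.2 h2) _
  refine ⟨(u 0 / u 2, u 1 / u 2), ⟨hspan, ?_⟩, ?_⟩
  · rw [hu', herm_smul_smul] at hiso
    exact (herm_affine_self_eq_zero_iff q _ _).1 <|
      (mul_eq_zero.1 hiso).resolve_left (mul_ne_zero h2 (pow_ne_zero _ h2))
  · rintro ⟨x, y⟩ ⟨hxy, -⟩
    exact affine_eq_of_span_eq (hxy.symm.trans hspan)

end Representatives

lemma card_filter_pow_eq_mul_le {R : Type*} [CommRing R] [IsDomain R] [Fintype R]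
    [DecidableEq R] {n : ℕ} (hn : 2 ≤ n) (a : R) : #{x | x ^ n = a * x} ≤ n := by
  have hdeg : (X ^ n - C a * X : R[X]).natDegree = n := by
    compute_degree!
    · simp [show n ≠ 1 by omega]
    all_goals omega
  have hP : (X ^ n - C a * X : R[X]) ≠ 0 := by
    intro h
    rw [h, natDegree_zero] at hdeg
    omega
  refine (card_le_degree_of_subset_roots fun x hx ↦ ?_).trans_eq hdeg
  rw [mem_roots hP, IsRoot, eval_sub, eval_mul, eval_pow, eval_C, eval_X, sub_eq_zero]
  simpa using hx

lemma AddMonoidHom.card_image_mul_card_fiber_zero {G H : Type*} [AddGroup G] [Fintype G]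
    [AddMonoid H] [DecidableEq H] (f : G →+ H) :
    #(univ.image f) * #{g | f g = 0} = Fintype.card G := by
  rw [← card_univ, card_eq_sum_card_image f univ, sum_const_nat]
  intro c hc
  obtain ⟨g, -, rfl⟩ := mem_image.1 hc
  exact AddMonoidHom.card_fiber_eq_of_mem_range f ⟨g, rfl⟩ ⟨0, map_zero f⟩

lemma pow_pow_eq_self_of_card_eq_sq {K : Type*} [Field K] [Fintype K] {q : ℕ}
    (hcard : Fintype.card K = q ^ 2) (x : K) : (x ^ q) ^ q = x := by
  rw [← pow_mul, ← sq, ← hcard, FiniteField.pow_card]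

lemma two_le_of_card_eq_sq {α : Type*} [Fintype α] [Nontrivial α] {q : ℕ}
    (hcard : Fintype.card α = q ^ 2) : 2 ≤ q := by
  have := hcard ▸ Fintype.one_lt_card (α := α)
  exact (Nat.one_lt_pow_iff two_ne_zero).1 this

section FrobeniusTrace

variable (K : Type*) [Field K] (p e : ℕ) [ExpChar K p]

def frobeniusTrace : K →+ K :=
  AddMonoidHom.id K + (iterateFrobenius K p e : K →+* K).toAddMonoidHom

variable {K p e}

@[simp]
lemma frobeniusTrace_apply (y : K) : frobeniusTrace K p e y = y + y ^ p ^ e := rfl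

variable [Fintype K]

lemma frobeniusTrace_pow_eq_self (hcard : Fintype.card K = (p ^ e) ^ 2) (y : K) :
    frobeniusTrace K p e y ^ p ^ e = frobeniusTrace K p e y := by
  rw [frobeniusTrace_apply, add_pow_expChar_pow, pow_pow_eq_self_of_card_eq_sq hcard, add_comm]

lemma card_image_frobeniusTrace_and_card_ker [DecidableEq K]
    (hcard : Fintype.card K = (p ^ e) ^ 2) :
    #(univ.image (frobeniusTrace K p e)) = p ^ e ∧ #{y | frobeniusTrace K p e y = 0} = p ^ e := by
  have hq := two_le_of_card_eq_sq hcard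
  have himage : #(univ.image (frobeniusTrace K p e)) ≤ p ^ e := by
    refine (card_le_card ?_).trans (card_filter_pow_eq_mul_le hq (1 : K))
    intro c hc
    obtain ⟨y, -, rfl⟩ := mem_image.1 hc
    simpa using frobeniusTrace_pow_eq_self hcard y
  have hker : #{y | frobeniusTrace K p e y = 0} ≤ p ^ e := by
    refine (card_le_card ?_).trans (card_filter_pow_eq_mul_le hq (-1 : K))
    intro y hy
    simp only [mem_filter, mem_univ, true_and] at hy ⊢
    rw [frobeniusTrace_apply] at hy
    linear_combination hy
  have hmul := (frobeniusTrace K p e).card_image_mul_card_fiber_zero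
  rw [hcard] at hmul
  constructor <;> nlinarith

lemma image_frobeniusTrace [DecidableEq K] (hcard : Fintype.card K = (p ^ e) ^ 2) :
    univ.image (frobeniusTrace K p e) = ({c | c ^ p ^ e = c} : Finset K) := by
  refine eq_of_subset_of_card_le (fun c hc ↦ ?_) ?_
  · obtain ⟨y, -, rfl⟩ := mem_image.1 hc
    simpa using frobeniusTrace_pow_eq_self hcard y
  · rw [(card_image_frobeniusTrace_and_card_ker hcard).1]
    simpa using card_filter_pow_eq_mul_le (two_le_of_card_eq_sq hcard) (1 : K)

lemma card_fiber_frobeniusTrace [DecidableEq K] (hcard : Fintype.card K = (p ^ e) ^ 2) {c : K}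
    (hc : c ^ p ^ e = c) : #{y | y + y ^ p ^ e = c} = p ^ e := by
  have hc' : c ∈ univ.image (frobeniusTrace K p e) := by
    rw [image_frobeniusTrace hcard]
    simpa using hc
  obtain ⟨y, -, hy⟩ := mem_image.1 hc'
  calc #{y | y + y ^ p ^ e = c} = #{y | frobeniusTrace K p e y = c} := rfl
    _ = #{y | frobeniusTrace K p e y = 0} :=
      AddMonoidHom.card_fiber_eq_of_mem_range _ ⟨y, hy⟩ ⟨0, map_zero _⟩
    _ = p ^ e := (card_image_frobeniusTrace_and_card_ker hcard).2

lemma card_filter_norm_eq_trace [DecidableEq K] (hcard : Fintype.card K = (p ^ e) ^ 2) :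
    #{xy : K × K | xy.1 ^ (p ^ e + 1) = xy.2 + xy.2 ^ p ^ e} = (p ^ e) ^ 3 := by
  have hnorm (x : K) : (x ^ (p ^ e + 1)) ^ p ^ e = x ^ (p ^ e + 1) := by
    rw [pow_succ, mul_pow, pow_pow_eq_self_of_card_eq_sq hcard, mul_comm]
  calc #{xy : K × K | xy.1 ^ (p ^ e + 1) = xy.2 + xy.2 ^ p ^ e}
      = ∑ x : K, #{y | x ^ (p ^ e + 1) = y + y ^ p ^ e} := by
        simp only [card_filter]
        exact Fintype.sum_prod_type _
    _ = ∑ _x : K, p ^ e := Finset.sum_congr rfl fun x _ ↦ by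
        simp only [eq_comm (a := x ^ (p ^ e + 1))]
        exact card_fiber_frobeniusTrace hcard (hnorm x)
    _ = (p ^ e) ^ 3 := by rw [sum_const, card_univ, hcard, smul_eq_mul]; ring

end FrobeniusTrace

theorem affine_representatives_general
    (p e q : ℕ) (hp : p.Prime) (hq : q = p ^ e)
    (K : Type) [Field K] [Fintype K] [DecidableEq K]
    (hcard : Fintype.card K = q ^ 2) :
    (∀ u : Fin 3 → K, u ≠ 0 → herm q u u = 0 →
      Submodule.span K {u} ≠ Submodule.span K {(![0, 1, 0] : Fin 3 → K)} →
      ∃! xy : K × K,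
        Submodule.span K {u} = Submodule.span K {(![xy.1, xy.2, 1] : Fin 3 → K)}
        ∧ xy.1 ^ (q + 1) = xy.2 + xy.2 ^ q)
    ∧ (Finset.univ.filter (fun xy : K × K => xy.1 ^ (q + 1) = xy.2 + xy.2 ^ q)).card
        = q ^ 3 := by
  subst hq
  have : Fact p.Prime := ⟨hp⟩
  have : CharP K p := charP_of_card_eq_prime_pow (hcard.trans (pow_mul p e 2).symm)
  have hq : p ^ e ≠ 0 := by have := two_le_of_card_eq_sq hcard; omega
  exact ⟨fun u hu hiso hne ↦ existsUnique_affine_representative hq hu hiso hne,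
    card_filter_norm_eq_trace hcard⟩

theorem affine_representatives
    (p e q : ℕ) (hp : p.Prime) (he : 0 < e) (hq : q = p ^ e)
    (K : Type) [Field K] [Fintype K] [DecidableEq K]
    (hcard : Fintype.card K = q ^ 2) :
    (∀ u : Fin 3 → K, u ≠ 0 → herm q u u = 0 →
      Submodule.span K {u} ≠ Submodule.span K {(![0, 1, 0] : Fin 3 → K)} →
      ∃! xy : K × K,
        Submodule.span K {u} = Submodule.span K {(![xy.1, xy.2, 1] : Fin 3 → K)}
        ∧ xy.1 ^ (q + 1) = xy.2 + xy.2 ^ q)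
    ∧ (Finset.univ.filter (fun xy : K × K => xy.1 ^ (q + 1) = xy.2 + xy.2 ^ q)).card
        = q ^ 3 :=
  affine_representatives_general p e q hp hq K hcard
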